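/- arXiv:2408.04221 — 2 statements merged into one kernel-verified Lean document; each statement's English description precedes it below -/
import Mathlib

section
/- Let X ~ N(α(t)x, σ(t)² I) in ℝ^d and, given X = z_t, let Y have distribution N(α(s)x + sqrt(σ(s)² − β²)·(z_t − α(t)x)/σ(t), β² I), where 0 < β² ≤ σ(s)² and σ(t) > 0. Then Y ~ N(α(s)x, σ(s)² I). -/
/-!
The two standard Gaussian noises `p.1 = ε₁`, `p.2 = ε₂` realise `X = αt • x + σt • ε₁` and the
conditional law of `Y` given `X`. Once `σt` cancels, `Y = αs • x + √(σs² - β²) • ε₁ + β • ε₂`, and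
coordinatewise `a ε₁ + b ε₂ ~ N(0, a² + b²)` because the convolution of centred Gaussians adds the
variances; here `a² + b² = σs²`, the law of `σs • ε`.
-/

open MeasureTheory ProbabilityTheory

/-- The standard Gaussian measure on `ℝ^d`. -/
noncomputable def stdGaussian (d : ℕ) : Measure (Fin d → ℝ) :=
  Measure.pi fun _ => gaussianReal 0 1

theorem MeasureTheory.MeasurePreserving.pi_prod {ι α β γ : Type*} [Fintype ι]
    [MeasurableSpace α] [MeasurableSpace β] [MeasurableSpace γ]
    {μ : Measure α} {ν : Measure β} {ρ : Measure γ} [SigmaFinite μ] [SigmaFinite ν]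
    [SigmaFinite ρ] {g : α × β → γ} (hg : MeasurePreserving g (μ.prod ν) ρ) :
    MeasurePreserving (fun (p : (ι → α) × (ι → β)) i => g (p.1 i, p.2 i))
      ((Measure.pi fun _ => μ).prod (Measure.pi fun _ => ν)) (Measure.pi fun _ => ρ) :=
  (measurePreserving_pi _ _ fun _ => hg).comp
    (measurePreserving_arrowProdEquivProdArrow α β ι _ _).symm

theorem measurePreserving_const_mul_gaussianReal (c : ℝ) :
    MeasurePreserving (c * ·) (gaussianReal 0 1) (gaussianReal 0 (.mk (c ^ 2) (sq_nonneg _))) :=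
  ⟨measurable_const_mul c, by rw [gaussianReal_map_const_mul, mul_zero, mul_one]⟩

theorem measurePreserving_mul_fst_add_mul_snd_gaussianReal (a b : ℝ) :
    MeasurePreserving (fun q : ℝ × ℝ => a * q.1 + b * q.2)
      ((gaussianReal 0 1).prod (gaussianReal 0 1))
      (gaussianReal 0 (.mk (a ^ 2 + b ^ 2) (by positivity))) := by
  refine ⟨by fun_prop, ?_⟩
  have hsplit : (fun q : ℝ × ℝ => a * q.1 + b * q.2)
      = (fun q : ℝ × ℝ => q.1 + q.2) ∘ Prod.map (a * ·) (b * ·) := rfl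
  rw [hsplit, ← Measure.map_map measurable_add (by fun_prop),
    ← Measure.map_prod_map _ _ (measurable_const_mul a) (measurable_const_mul b),
    (measurePreserving_const_mul_gaussianReal a).map_eq,
    (measurePreserving_const_mul_gaussianReal b).map_eq]
  exact gaussianReal_conv_gaussianReal.trans (by rw [add_zero]; rfl)

theorem map_smul_add_smul_pi_gaussianReal {ι : Type*} [Fintype ι] {a b c : ℝ}
    (h : a ^ 2 + b ^ 2 = c ^ 2) :
    ((Measure.pi fun _ : ι => gaussianReal 0 1).prod (Measure.pi fun _ => gaussianReal 0 1)).map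
        (fun p => a • p.1 + b • p.2)
      = (Measure.pi fun _ : ι => gaussianReal 0 1).map (c • ·) := by
  have hvar : (.mk (a ^ 2 + b ^ 2) (by positivity) : NNReal) = .mk (c ^ 2) (sq_nonneg _) :=
    Subtype.ext h
  have hlhs := (measurePreserving_mul_fst_add_mul_snd_gaussianReal a b).pi_prod (ι := ι)
  rw [hvar] at hlhs
  exact hlhs.map_eq.trans
    (measurePreserving_pi _ _ fun _ => measurePreserving_const_mul_gaussianReal c).map_eq.symm

theorem stmt5_general (d : ℕ) (x : Fin d → ℝ) (αs αt σs σt β : ℝ)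
    (hσt : 0 < σt) (hβ : 0 < β) (hβσ : β ≤ σs) :
    Measure.map
        (fun p : (Fin d → ℝ) × (Fin d → ℝ) =>
          αs • x + (Real.sqrt (σs ^ 2 - β ^ 2) / σt) • ((αt • x + σt • p.1) - αt • x)
            + β • p.2)
        ((stdGaussian d).prod (stdGaussian d))
      = Measure.map (fun z => αs • x + σs • z) (stdGaussian d) := by
  have hvar : Real.sqrt (σs ^ 2 - β ^ 2) ^ 2 + β ^ 2 = σs ^ 2 := by
    rw [Real.sq_sqrt (by nlinarith)]; ring
  have hsimp : (fun p : (Fin d → ℝ) × (Fin d → ℝ) =>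
      αs • x + (Real.sqrt (σs ^ 2 - β ^ 2) / σt) • ((αt • x + σt • p.1) - αt • x) + β • p.2)
      = (αs • x + ·) ∘ fun p => Real.sqrt (σs ^ 2 - β ^ 2) • p.1 + β • p.2 := by
    ext p
    simp [smul_smul, div_mul_cancel₀ _ hσt.ne', add_assoc]
  have hshift : Measurable (αs • x + · : (Fin d → ℝ) → Fin d → ℝ) := by fun_prop
  rw [hsimp, ← Measure.map_map hshift (by fun_prop), _root_.stdGaussian,
    map_smul_add_smul_pi_gaussianReal hvar, Measure.map_map hshift (by fun_prop)]
  rfl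

/-- If `X ~ N(α(t) x, σ(t)² I)` (represented as `X = α(t)•x + σ(t)•ε₁` with `ε₁` standard
Gaussian), and given `X = z_t` the variable `Y` is
`N(α(s)•x + sqrt(σ(s)² - β²)•(z_t - α(t)•x)/σ(t), β² I)` (represented via an independent
standard Gaussian `ε₂`), then the marginal law of `Y` is `N(α(s) x, σ(s)² I)`. -/
theorem stmt5 (d : ℕ) (x : Fin d → ℝ) (αs αt σs σt β : ℝ)
    (hσt : 0 < σt) (hσs : 0 < σs) (hβ : 0 < β) (hβσ : β ≤ σs) :
    Measure.map
        (fun p : (Fin d → ℝ) × (Fin d → ℝ) =>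
          αs • x + (Real.sqrt (σs ^ 2 - β ^ 2) / σt) • ((αt • x + σt • p.1) - αt • x)
            + β • p.2)
        ((stdGaussian d).prod (stdGaussian d))
      = Measure.map (fun z => αs • x + σs • z) (stdGaussian d) :=
  stmt5_general d x αs αt σs σt β hσt hβ hβσ
end

section
/- Let Z = a·X + c·ε with X an ℝ^d-valued random variable with density, ε ~ N(0, I_d) independent of X, and a, c > 0. Then the score of the marginal density p of Z satisfies ∇_z log p(z) = (a/c²) E[X | Z = z] − z/c² (Tweedie's formula). -/
/-!
The marginal density is the smoothing `p z = ∫ φ (z - a x) dμ(x)` of the law of `X` by the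
Gaussian kernel `φ`, whose gradient is `∇φ v = -(φ v / c²) v`. Since `φ`, `v ↦ φ v • v` and hence
`∇φ` are bounded, one may differentiate under the integral, giving
`∇p z = -(1/c²) ∫ φ (z - a x) (z - a x) dμ(x) = -(1/c²) (p z • z - a ∫ φ (z - a x) x dμ(x))`.
Dividing by `p z > 0` yields the score.
-/

open Real MeasureTheory InnerProductSpace

lemma mul_exp_neg_sq_div_le {c t : ℝ} (hc : 0 < c) :
    t * exp (-t ^ 2 / (2 * c ^ 2)) ≤ c := by
  set s := t ^ 2 / (2 * c ^ 2)
  have ht : t ≤ c * (1 + s) := by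
    have : c * (1 + s) - t = ((t - c) ^ 2 + c ^ 2) / (2 * c) := by
      simp only [s]; field_simp; ring
    have : 0 ≤ ((t - c) ^ 2 + c ^ 2) / (2 * c) := by positivity
    linarith
  calc t * exp (-t ^ 2 / (2 * c ^ 2)) ≤ c * (1 + s) * exp (-s) := by
        rw [neg_div]; gcongr
    _ ≤ c * exp s * exp (-s) := by gcongr; linarith [add_one_le_exp s]
    _ = c := by rw [mul_assoc, ← exp_add, add_neg_cancel, exp_zero, mul_one]

section GaussianKernel

variable {E : Type*} [NormedAddCommGroup E]

noncomputable def gaussianKernel (C c : ℝ) (w : E) : ℝ := C * exp (-‖w‖ ^ 2 / (2 * c ^ 2))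

variable {C c : ℝ}

lemma gaussianKernel_pos (hC : 0 < C) (w : E) : 0 < gaussianKernel C c w := by
  unfold gaussianKernel; positivity

lemma continuous_gaussianKernel : Continuous (gaussianKernel C c : E → ℝ) := by
  unfold gaussianKernel; fun_prop

lemma norm_gaussianKernel_le (hC : 0 ≤ C) (w : E) : ‖gaussianKernel C c w‖ ≤ C := by
  rw [gaussianKernel, norm_mul, norm_of_nonneg hC, norm_of_nonneg (exp_nonneg _)]
  refine mul_le_of_le_one_right hC (exp_le_one_iff.mpr ?_)
  rw [neg_div]
  exact neg_nonpos.mpr (by positivity)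

lemma norm_gaussianKernel_smul_le [NormedSpace ℝ E] (hC : 0 ≤ C) (hc : 0 < c) (w : E) :
    ‖gaussianKernel C c w • w‖ ≤ C * c := by
  rw [gaussianKernel, norm_smul, norm_mul, norm_of_nonneg hC, norm_of_nonneg (exp_nonneg _),
    mul_assoc, mul_comm (exp _)]
  exact mul_le_mul_of_nonneg_left (mul_exp_neg_sq_div_le hc) hC

lemma hasGradientAt_gaussianKernel [InnerProductSpace ℝ E] [CompleteSpace E] (w : E) :
    HasGradientAt (gaussianKernel C c) ((-(c ^ 2)⁻¹ * gaussianKernel C c w) • w) w := by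
  have h := (((hasStrictFDerivAt_norm_sq w).hasFDerivAt.const_mul (-(2 * c ^ 2)⁻¹)).exp).const_mul C
  have hfun : gaussianKernel C c = fun y : E => C * exp (-(2 * c ^ 2)⁻¹ * ‖y‖ ^ 2) := by
    funext y; rw [gaussianKernel, neg_div, div_eq_inv_mul, neg_mul]
  rw [hasGradientAt_iff_hasFDerivAt]
  refine (hfun ▸ h).congr_fderiv ?_
  ext v
  simp only [hfun, map_smul, map_neg, smul_eq_mul, neg_mul, neg_smul, neg_apply, smul_apply,
    coe_innerSL_apply, toDual_apply_apply, nsmul_eq_mul, Nat.cast_ofNat]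
  ring

end GaussianKernel

lemma integral_smul_sub_smul {E : Type*} [NormedAddCommGroup E] [NormedSpace ℝ E]
    [CompleteSpace E] [MeasurableSpace E] {μ : Measure E} {f : E → ℝ} (hf : Integrable f μ)
    (a : ℝ) (w : E) (hfw : Integrable (fun x => f x • (w - a • x)) μ) :
    ∫ x, f x • (w - a • x) ∂μ = (∫ x, f x ∂μ) • w - a • ∫ x, f x • x ∂μ := by
  have hfx : Integrable (fun x => a • (f x • x)) μ :=
    ((hf.smul_const w).sub hfw).congr (ae_of_all μ fun x => by
      simp only [Pi.sub_apply, smul_sub, smul_comm a (f x) x, sub_sub_cancel])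
  simp only [smul_sub, smul_comm (f _) a]
  rw [integral_sub (hf.smul_const w) hfx, integral_smul_const, integral_smul]

lemma HasGradientAt.log {E : Type*} [NormedAddCommGroup E] [InnerProductSpace ℝ E]
    [CompleteSpace E] {f : E → ℝ} {f' x : E} (hf : HasGradientAt f f' x) (hx : f x ≠ 0) :
    HasGradientAt (fun y => Real.log (f y)) ((f x)⁻¹ • f') x := by
  rw [hasGradientAt_iff_hasFDerivAt, map_smul]
  exact hf.hasFDerivAt.log hx

section Smoothing

variable {E : Type*} [NormedAddCommGroup E] [InnerProductSpace ℝ E]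
  [MeasurableSpace E] [BorelSpace E] [SecondCountableTopology E]
  {μ : Measure E} [IsFiniteMeasure μ]

lemma integrable_comp_sub_smul {F : Type*} [NormedAddCommGroup F] {h : E → F} (hh : Continuous h)
    {M : ℝ} (hM : ∀ v, ‖h v‖ ≤ M) (w : E) (a : ℝ) : Integrable (fun x => h (w - a • x)) μ :=
  (integrable_const M).mono' (by fun_prop) (ae_of_all μ fun _ => hM _)

lemma hasGradientAt_integral_comp_sub_smul [CompleteSpace E] {g : E → ℝ} {g' : E → E}
    (hg : ∀ v, HasGradientAt g (g' v) v) (hg'c : Continuous g') {M : ℝ} (hM : ∀ v, ‖g' v‖ ≤ M)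
    {a : ℝ} {w : E} (hgi : Integrable (fun x => g (w - a • x)) μ) :
    HasGradientAt (fun w => ∫ x, g (w - a • x) ∂μ) (∫ x, g' (w - a • x) ∂μ) w := by
  have hgc : Continuous g := continuous_iff_continuousAt.mpr fun v => (hg v).continuousAt
  have hderiv : HasFDerivAt (fun w => ∫ x, g (w - a • x) ∂μ)
      (∫ x, toDual ℝ E (g' (w - a • x)) ∂μ) w :=
    hasFDerivAt_integral_of_dominated_of_fderiv_le (bound := fun _ => M) Filter.univ_mem
      (Filter.Eventually.of_forall fun w => by fun_prop) hgi (by fun_prop)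
      (ae_of_all μ fun x w _ => by simpa using hM _) (integrable_const M)
      (ae_of_all μ fun x w _ => ((hg _).hasFDerivAt.comp w ((hasFDerivAt_id w).sub_const _)))
  rw [hasGradientAt_iff_hasFDerivAt]
  refine hderiv.congr_fderiv ?_
  exact (toDual ℝ E).toLinearIsometry.integral_comp_comm _

end Smoothing

section Score

variable {E : Type*} [NormedAddCommGroup E] [InnerProductSpace ℝ E]
  [MeasurableSpace E] [BorelSpace E] [SecondCountableTopology E]
  {μ : Measure E} [IsFiniteMeasure μ] {C c : ℝ}

lemma integral_gaussianKernel_comp_sub_smul_pos [NeZero μ] (hC : 0 < C) (a : ℝ) (w : E) :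
    0 < ∫ x, gaussianKernel C c (w - a • x) ∂μ := by
  rw [integral_pos_iff_support_of_nonneg (fun x => (gaussianKernel_pos hC _).le)
    (integrable_comp_sub_smul continuous_gaussianKernel (norm_gaussianKernel_le hC.le) w a)]
  simp [Function.support_eq_univ fun x => (gaussianKernel_pos hC _).ne', NeZero.ne μ]

lemma hasGradientAt_integral_gaussianKernel [CompleteSpace E] (hC : 0 ≤ C) (hc : 0 < c)
    (a : ℝ) (w : E) :
    HasGradientAt (fun w => ∫ x, gaussianKernel C c (w - a • x) ∂μ)
      ((-(c ^ 2)⁻¹) • ((∫ x, gaussianKernel C c (w - a • x) ∂μ) • w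
        - a • ∫ x, gaussianKernel C c (w - a • x) • x ∂μ)) w := by
  have hbound (v : E) : ‖(-(c ^ 2)⁻¹ * gaussianKernel C c v) • v‖ ≤ (c ^ 2)⁻¹ * (C * c) := by
    rw [mul_smul, norm_smul, norm_neg, norm_inv, norm_pow, norm_of_nonneg hc.le]
    exact mul_le_mul_of_nonneg_left (norm_gaussianKernel_smul_le hC hc v) (by positivity)
  have hint := integrable_comp_sub_smul (μ := μ) continuous_gaussianKernel
    (norm_gaussianKernel_le (c := c) hC) w a
  have hgrad := hasGradientAt_integral_comp_sub_smul hasGradientAt_gaussianKernel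
    ((continuous_const.mul continuous_gaussianKernel).smul continuous_id) hbound hint
  simp only [mul_smul] at hgrad
  rwa [integral_smul, integral_smul_sub_smul hint a w (integrable_comp_sub_smul
    (continuous_gaussianKernel.smul continuous_id) (norm_gaussianKernel_smul_le hC hc) w a)]
    at hgrad

end Score

/-- `p` is the density of `Z = aX + cε` and `postMean z` is `E[X | Z = z]`, both written as
integrals of the Gaussian kernel against the law `μ` of `X`. -/
theorem stmt10_general (d : ℕ) (μ : Measure (EuclideanSpace ℝ (Fin d)))
    [IsProbabilityMeasure μ] (a c : ℝ) (hc : 0 < c)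
    (φ : EuclideanSpace ℝ (Fin d) → ℝ)
    (hφ : ∀ w, φ w = (2 * Real.pi * c ^ 2) ^ (-(d : ℝ) / 2) *
      Real.exp (-‖w‖ ^ 2 / (2 * c ^ 2)))
    (p : EuclideanSpace ℝ (Fin d) → ℝ)
    (hp : ∀ z, p z = ∫ x, φ (z - a • x) ∂μ)
    (postMean : EuclideanSpace ℝ (Fin d) → EuclideanSpace ℝ (Fin d))
    (hpost : ∀ z, postMean z = (p z)⁻¹ • ∫ x, φ (z - a • x) • x ∂μ)
    (z : EuclideanSpace ℝ (Fin d)) :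
    gradient (fun w => Real.log (p w)) z
      = (a / c ^ 2) • postMean z - (1 / c ^ 2) • z := by
  obtain ⟨C, hC, rfl⟩ : ∃ C > 0, φ = gaussianKernel C c := ⟨_, by positivity, funext hφ⟩
  obtain rfl : p = fun w => ∫ x, gaussianKernel C c (w - a • x) ∂μ := funext hp
  have hpz := integral_gaussianKernel_comp_sub_smul_pos (μ := μ) (c := c) hC a z
  rw [((hasGradientAt_integral_gaussianKernel hC.le hc a z).log hpz.ne').gradient, hpost]
  match_scalars <;> field_simp

/-- Tweedie's formula: with `Z = aX + cε`, `ε ~ N(0, I_d)` independent of `X ~ μ`,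
marginal density `p z = ∫ φ_c(z - a x) dμ(x)` and posterior mean
`E[X | Z = z] = (p z)⁻¹ • ∫ φ_c(z - a x) • x dμ(x)`, the score of the marginal satisfies
`∇_z log p(z) = (a/c²) E[X | Z = z] - z/c²`. -/
theorem stmt10 (d : ℕ) (μ : Measure (EuclideanSpace ℝ (Fin d)))
    [IsProbabilityMeasure μ] (hac : μ ≪ volume) (a c : ℝ) (ha : 0 < a) (hc : 0 < c)
    (hL2 : Integrable (fun x => ‖x‖ ^ 2) μ)
    (φ : EuclideanSpace ℝ (Fin d) → ℝ)
    (hφ : ∀ w, φ w = (2 * Real.pi * c ^ 2) ^ (-(d : ℝ) / 2) *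
      Real.exp (-‖w‖ ^ 2 / (2 * c ^ 2)))
    (p : EuclideanSpace ℝ (Fin d) → ℝ)
    (hp : ∀ z, p z = ∫ x, φ (z - a • x) ∂μ)
    (postMean : EuclideanSpace ℝ (Fin d) → EuclideanSpace ℝ (Fin d))
    (hpost : ∀ z, postMean z = (p z)⁻¹ • ∫ x, φ (z - a • x) • x ∂μ)
    (z : EuclideanSpace ℝ (Fin d)) :
    gradient (fun w => Real.log (p w)) z
      = (a / c ^ 2) • postMean z - (1 / c ^ 2) • z :=
  stmt10_general d μ a c hc φ hφ p hp postMean hpost z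
end
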